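/- For every extended Plebeia tree node n satisfying node_invariant, the association list modelize_node_aux(n) is a model_of_node: its list of keys is prefix-free and strictly increasing in the lexicographic order. -/
import Mathlib


/-- A side is `L` or `R`. -/
inductive Side : Type
  | L | R
deriving DecidableEq, Repr

/-- A key is a list of sides. -/
abbrev Key := List Side

/-- The strict order `L < R` on sides. -/
def Side.lt : Side → Side → Prop := fun a b => a = Side.L ∧ b = Side.R

/-- The strict lexicographic order on keys induced by `L < R`. -/
def keyLt : Key → Key → Prop := List.Lex Side.lt

/-- A list of keys is prefix-free: for any two distinct keys in it,
neither is a prefix of the other. -/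
def PrefixFreeList (ks : List Key) : Prop :=
  List.Pairwise (fun a b => ¬ a <+: b ∧ ¬ b <+: a) ks

/-- A set of keys is prefix-free. -/
def PrefixFreeSet (S : Set Key) : Prop :=
  ∀ a ∈ S, ∀ b ∈ S, a ≠ b → ¬ a <+: b

/-- A list of keys is strictly increasing in the lexicographic order. -/
def SortedKeys (ks : List Key) : Prop := List.Pairwise keyLt ks

/-- Key list of an association list is prefix-free and strictly increasing. -/
def GoodKeyList (ks : List Key) : Prop := PrefixFreeList ks ∧ SortedKeys ks

/-- Prepend the key `s` to the key of every entry. -/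
def prependAll {β : Type _} (s : Key) (l : List (Key × β)) : List (Key × β) :=
  l.map (fun e => (s ++ e.1, e.2))

/-- `lookup l k` is `some` of the value of the first entry of `l` with key `k`. -/
def lookupA {β : Type _} (l : List (Key × β)) (k : Key) : Option β :=
  (l.find? (fun e => decide (e.1 = k))).map Prod.snd
/-- Extended Plebeia tree nodes, over a value type `α`, index type `ι`, hash type `η`. -/
inductive PNode (α ι η : Type) : Type
  | leaf : α → Option ι → Option η → PNode α ι η
  | branch : PNode α ι η → PNode α ι η → Option ι → Option η → PNode α ι η
  | extender : Key → PNode α ι η → Option ι → PNode α ι η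
  | bud : Option (PNode α ι η) → Option ι → Option η → PNode α ι η

variable {α ι η : Type}

def PNode.isExtender : PNode α ι η → Prop
  | .extender _ _ _ => True
  | _ => False

def PNode.isBud : PNode α ι η → Prop
  | .bud _ _ _ => True
  | _ => False

def PNode.isLeaf : PNode α ι η → Prop
  | .leaf _ _ _ => True
  | _ => False

/-- A node is indexed if its `Option index` field is `Some`. -/
def PNode.indexed : PNode α ι η → Prop
  | .leaf _ oi _ => oi.isSome
  | .branch _ _ oi _ => oi.isSome
  | .extender _ _ oi => oi.isSome
  | .bud _ oi _ => oi.isSome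

/-- A leaf/branch/bud is hashed if its `Option hash` field is `Some`;
an extender is hashed if its child is hashed. -/
def PNode.hashed : PNode α ι η → Prop
  | .leaf _ _ oh => oh.isSome
  | .branch _ _ _ oh => oh.isSome
  | .extender _ n _ => n.hashed
  | .bud _ _ oh => oh.isSome

/-- Structural invariants (SI1)-(SI6) at every subtree. -/
def PNode.inv : PNode α ι η → Prop
  | .leaf _ _ _ => True
  | .branch l r oi oh =>
      (oh.isSome → (l.hashed ∧ r.hashed)) ∧        -- SI3
      (oi.isSome → oh.isSome = true) ∧             -- SI4
      (oi.isSome → (l.indexed ∧ r.indexed)) ∧      -- SI5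
      l.inv ∧ r.inv
  | .extender s n oi =>
      (¬ n.isExtender) ∧                           -- SI1
      s ≠ [] ∧                                     -- SI2
      (oi.isSome → n.hashed) ∧                     -- SI4 (extender is hashed iff child is)
      (oi.isSome → n.indexed) ∧                    -- SI5
      n.inv
  | .bud none oi oh => (oi.isSome → oh.isSome = true)  -- SI4
  | .bud (some n) oi oh =>
      (¬ n.isBud) ∧ (¬ n.isLeaf) ∧                 -- SI6
      (oh.isSome → n.hashed) ∧                     -- SI3
      (oi.isSome → oh.isSome = true) ∧             -- SI4
      (oi.isSome → n.indexed) ∧                    -- SI5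
      n.inv

/-- Nested values: either a value or a nested key--value store (association list). -/
inductive NestedValue (α : Type) : Type
  | value : α → NestedValue α
  | map : List (Key × NestedValue α) → NestedValue α

/-- `modelize_node_aux`. -/
def modelizeNodeAux : PNode α ι η → List (Key × NestedValue α)
  | .leaf v _ _ => [([], .value v)]
  | .branch l r _ _ =>
      prependAll [Side.L] (modelizeNodeAux l) ++ prependAll [Side.R] (modelizeNodeAux r)
  | .extender s n _ => prependAll s (modelizeNodeAux n)
  | .bud none _ _ => [([], .map [])]
  | .bud (some n) _ _ => [([], .map (modelizeNodeAux n))]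

lemma lex_append (s a b : Key) (h : keyLt a b) : keyLt (s ++ a) (s ++ b) := by
  induction s with
  | nil => exact h
  | cons x xs ih => exact List.Lex.cons ih

lemma good_prepend (s : Key) (ks : List Key) (h : GoodKeyList ks) :
    GoodKeyList (ks.map (fun k => s ++ k)) := by
  obtain ⟨hpf, hs⟩ := h
  constructor
  · exact List.pairwise_map.2 <| hpf.imp (fun {a b} hab =>
      ⟨fun hp => hab.1 ((List.prefix_append_right_inj s).1 hp),
       fun hp => hab.2 ((List.prefix_append_right_inj s).1 hp)⟩)
  · exact List.pairwise_map.2 <| hs.imp (fun {a b} hab => lex_append s a b hab)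

lemma map_fst_prependAll {β : Type _} (s : Key) (l : List (Key × β)) :
    (prependAll s l).map Prod.fst = (l.map Prod.fst).map (fun k => s ++ k) := by
  simp [prependAll, List.map_map, Function.comp]

theorem stmt0_aux {α ι η : Type} : ∀ (n : PNode α ι η),
    GoodKeyList ((modelizeNodeAux n).map Prod.fst)
  | .leaf v oi oh => by
      constructor <;> simp [modelizeNodeAux, PrefixFreeList, SortedKeys]
  | .branch l r oi oh => by
      have ihl := stmt0_aux l
      have ihr := stmt0_aux r
      simp only [modelizeNodeAux, List.map_append, map_fst_prependAll]
      have hl := good_prepend [Side.L] _ ihl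
      have hr := good_prepend [Side.R] _ ihr
      have hcross : ∀ a ∈ ((modelizeNodeAux l).map Prod.fst).map (fun k => [Side.L] ++ k),
          ∀ b ∈ ((modelizeNodeAux r).map Prod.fst).map (fun k => [Side.R] ++ k),
          (¬ a <+: b ∧ ¬ b <+: a) ∧ keyLt a b := by
        intro a ha b hb
        simp only [List.mem_map] at ha hb
        obtain ⟨ka, _, rfl⟩ := ha
        obtain ⟨kb, _, rfl⟩ := hb
        refine ⟨⟨fun hp => ?_, fun hp => ?_⟩, ?_⟩
        · exact absurd (List.cons_prefix_cons.1 hp).1 (by simp)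
        · exact absurd (List.cons_prefix_cons.1 hp).1 (by simp)
        · exact List.Lex.rel ⟨rfl, rfl⟩
      constructor
      · exact List.pairwise_append.2 ⟨hl.1, hr.1, fun a ha b hb => (hcross a ha b hb).1⟩
      · exact List.pairwise_append.2 ⟨hl.2, hr.2, fun a ha b hb => (hcross a ha b hb).2⟩
  | .extender s c oi => by
      have ih := stmt0_aux c
      simp only [modelizeNodeAux, map_fst_prependAll]
      exact good_prepend s _ ih
  | .bud none oi oh => by
      constructor <;> simp [modelizeNodeAux, PrefixFreeList, SortedKeys]
  | .bud (some c) oi oh => by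
      constructor <;> simp [modelizeNodeAux, PrefixFreeList, SortedKeys]

/-- for every extended Plebeia tree node satisfying the structural
invariants, `modelize_node_aux n` is a `model_of_node`: its list of keys is
prefix-free and strictly increasing in the lexicographic order. -/
theorem stmt0 {α ι η : Type} (n : PNode α ι η) (h : n.inv) :
    GoodKeyList ((modelizeNodeAux n).map Prod.fst) := by
  exact stmt0_aux n
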